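/- arXiv:1509.02122 — 2 statements merged into one kernel-verified Lean document; each statement's English description precedes it below -/
import Mathlib

section
/- For a finite simple graph G = (V,E), a subset Y ⊆ E is a multicut of G (i.e., equals E_Π for some decomposition Π of G) if and only if every cycle C of G satisfies |C ∩ Y| ≠ 1. -/
/-- A decomposition of a graph `G`: a partition of the vertex set such that
every block induces a connected subgraph. -/
def IsDecomposition {V : Type*} (G : SimpleGraph V) (P : Set (Set V)) : Prop :=
  Setoid.IsPartition P ∧ ∀ B ∈ P, (G.induce B).Connected

/-- The multicut associated to a partition: the edges of `G` whose endpoints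
lie in distinct blocks. -/
def multicutSet {V : Type*} (G : SimpleGraph V) (P : Set (Set V)) : Set (Sym2 V) :=
  {e | e ∈ G.edgeSet ∧ ∀ B ∈ P, ¬ (∀ x ∈ e, x ∈ B)}

/-!
Let `G'` be `G` with the edges of `Y` deleted. An edge `ab ∈ Y` lies on a circuit meeting `Y`
only in `ab` exactly when `a` and `b` are still connected in `G'`: the rest of such a circuit is an
`a`–`b` walk in `G'`, and conversely an `a`–`b` path in `G'` closes up with `ab` to a cycle.
If `Y = E_Π`, vertices connected in `G'` lie in a common block of `Π`, whereas the endpoints of an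
edge of `Y` do not. If no circuit meets `Y` exactly once, the components of `G'` form a
decomposition whose multicut is `Y`.
-/

namespace SimpleGraph

variable {V : Type*} {G : SimpleGraph V}

-- Rotate the trail to start at `x` and split it at `y`: the half not containing `s(x, y)` works.
theorem Walk.IsTrail.exists_walk_avoiding_of_mem_edges [DecidableEq V] {u x y : V}
    {c : G.Walk u u} (hc : c.IsTrail) (h : s(x, y) ∈ c.edges) :
    ∃ p : G.Walk x y, ∀ e ∈ p.edges, e ∈ c.edges ∧ e ≠ s(x, y) := by
  have hx := c.fst_mem_support_of_mem_edges h
  have hperm := c.rotate_edges x hx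
  have hy : y ∈ (c.rotate x hx).support :=
    (c.rotate x hx).snd_mem_support_of_mem_edges (hperm.mem_iff.mpr h)
  set p := (c.rotate x hx).takeUntil y hy
  set q := (c.rotate x hx).dropUntil y hy
  have hedges : (c.rotate x hx).edges = p.edges ++ q.edges := by
    rw [← Walk.edges_append, Walk.take_spec]
  have hnodup : (p.edges ++ q.edges).Nodup := hedges ▸ (hc.rotate hx).edges_nodup
  have hsub : ∀ e ∈ p.edges ++ q.edges, e ∈ c.edges := fun e he =>
    hperm.mem_iff.mp (hedges ▸ he)
  rcases List.mem_append.mp (hedges ▸ hperm.mem_iff.mpr h) with hp | hq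
  · refine ⟨q.reverse, fun e he => ?_⟩
    rw [Walk.edges_reverse, List.mem_reverse] at he
    exact ⟨hsub e (List.mem_append_right _ he),
      fun hexy => List.disjoint_of_nodup_append hnodup hp (hexy ▸ he)⟩
  · exact ⟨p, fun e he => ⟨hsub e (List.mem_append_left _ he),
      fun hexy => List.disjoint_of_nodup_append hnodup (hexy ▸ he) hq⟩⟩

theorem mk_mem_multicutSet_classes (r : Setoid V) {a b : V} :
    s(a, b) ∈ multicutSet G r.classes ↔ G.Adj a b ∧ ¬ r a b := by
  simp only [multicutSet, Setoid.classes, Set.mem_ofPred_eq, mem_edgeSet, Sym2.mem_iff,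
    forall_eq_or_imp, forall_eq, forall_exists_index]
  refine and_congr_right fun _ => ⟨fun h hab => h _ b rfl ⟨hab, r.refl b⟩, ?_⟩
  rintro h _ y rfl ⟨hay, hby⟩
  exact h (r.trans hay (r.symm hby))

theorem rel_of_reachable_deleteEdges_multicutSet (r : Setoid V) {a b : V}
    (h : (G.deleteEdges (multicutSet G r.classes)).Reachable a b) : r a b := by
  rw [reachable_iff_reflTransGen] at h
  induction h with
  | refl => exact r.refl a
  | tail _ hadj ih =>
    rw [deleteEdges_adj, mk_mem_multicutSet_classes] at hadj
    exact r.trans ih (not_not.mp fun h => hadj.2 ⟨hadj.1, h⟩)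

theorem isDecomposition_classes_reachableSetoid {G' : SimpleGraph V} (hle : G' ≤ G) :
    IsDecomposition G G'.reachableSetoid.classes := by
  refine ⟨Setoid.isPartition_classes _, ?_⟩
  rintro _ ⟨y, rfl⟩
  have hsupp : {x | G'.reachableSetoid x y} = (G'.connectedComponentMk y).supp := by
    ext x
    exact ConnectedComponent.eq.symm
  rw [hsupp]
  exact (G'.connectedComponentMk y).connected_toSimpleGraph.mono fun _ _ h => hle h

theorem reachable_deleteEdges_iff_exists_isCircuit {Y : Set (Sym2 V)} {a b : V}
    (hab : G.Adj a b) (hY : s(a, b) ∈ Y) :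
    (G.deleteEdges Y).Reachable a b ↔
      ∃ (u : V) (c : G.Walk u u), c.IsCircuit ∧ {e | e ∈ c.edges ∧ e ∈ Y} = {s(a, b)} := by
  classical
  constructor
  · intro hreach
    set H := G.deleteEdges (Y \ {s(a, b)})
    have hHdel : H.deleteEdges {s(a, b)} = G.deleteEdges Y := by
      rw [deleteEdges_deleteEdges, Set.sdiff_union_self, Set.union_singleton,
        Set.insert_eq_of_mem hY]
    obtain ⟨u, c, hc, habc⟩ := adj_and_reachable_delete_edges_iff_exists_cycle.mp
      ⟨by simp [H, hab], hHdel ▸ hreach⟩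
    have hcG : ∀ e ∈ c.edges, e ∈ G.edgeSet := fun e he =>
      edgeSet_mono (deleteEdges_le _) (c.edges_subset_edgeSet he)
    refine ⟨u, c.transfer G hcG, (hc.transfer hcG).isCircuit, ?_⟩
    ext e
    simp only [Walk.edges_transfer, Set.mem_ofPred_eq, Set.mem_singleton_iff]
    refine ⟨fun ⟨he, heY⟩ => ?_, fun he => he ▸ ⟨habc, hY⟩⟩
    have := c.edges_subset_edgeSet he
    simp only [H, edgeSet_deleteEdges, Set.mem_sdiff, Set.mem_singleton_iff] at this
    exact not_not.mp fun hne => this.2 ⟨heY, hne⟩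
  · rintro ⟨u, c, hc, hcY⟩
    obtain ⟨p, hp⟩ := hc.isTrail.exists_walk_avoiding_of_mem_edges (hcY.symm.subset rfl).1
    exact ⟨p.toDeleteEdges Y fun e he heY => (hp e he).2 (hcY.subset ⟨(hp e he).1, heY⟩)⟩

end SimpleGraph

open SimpleGraph in
theorem statement2_general {V : Type*} (G : SimpleGraph V)
    (Y : Set (Sym2 V)) (hYE : Y ⊆ G.edgeSet) :
    (∃ P : Set (Set V), IsDecomposition G P ∧ Y = multicutSet G P) ↔
      (∀ (u : V) (w : G.Walk u u), w.IsCircuit →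
        {e | e ∈ w.edges ∧ e ∈ Y}.ncard ≠ 1) := by
  constructor
  · rintro ⟨P, ⟨hP, -⟩, rfl⟩ u w hw hone
    obtain ⟨r, rfl⟩ : ∃ r : Setoid V, r.classes = P := ⟨_, Setoid.classes_mkClasses P hP⟩
    obtain ⟨e, he⟩ := Set.ncard_eq_one.mp hone
    induction e using Sym2.ind with | _ a b
    have heY : s(a, b) ∈ multicutSet G r.classes := (he.symm.subset rfl).2
    obtain ⟨hab, hnr⟩ := (mk_mem_multicutSet_classes r).mp heY
    exact hnr (rel_of_reachable_deleteEdges_multicutSet r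
      ((reachable_deleteEdges_iff_exists_isCircuit hab heY).mpr ⟨u, w, hw, he⟩))
  · intro hcirc
    refine ⟨_, isDecomposition_classes_reachableSetoid (G.deleteEdges_le Y), ?_⟩
    ext e
    induction e using Sym2.ind with | _ a b
    rw [mk_mem_multicutSet_classes]
    refine ⟨fun heY => ⟨hYE heY, fun hreach => ?_⟩, fun ⟨hab, hnr⟩ => ?_⟩
    · obtain ⟨u, c, hc, hcY⟩ :=
        (reachable_deleteEdges_iff_exists_isCircuit (hYE heY) heY).mp hreach
      exact hcirc u c hc (by rw [hcY, Set.ncard_singleton])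
    · by_contra heY
      exact hnr (deleteEdges_adj.mpr ⟨hab, heY⟩).reachable

/-- `Y ⊆ E` is a multicut of `G` iff every cycle of `G` meets `Y` in a number
of edges different from 1. -/
theorem statement2 {V : Type*} [Fintype V] (G : SimpleGraph V)
    (Y : Set (Sym2 V)) (hYE : Y ⊆ G.edgeSet) :
    (∃ P : Set (Set V), IsDecomposition G P ∧ Y = multicutSet G P) ↔
      (∀ (u : V) (w : G.Walk u u), w.IsCircuit →
        {e | e ∈ w.edges ∧ e ∈ Y}.ncard ≠ 1) :=
  statement2_general G Y hYE
end

section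
/- Let G = (V,E) be a finite simple graph, Y ⊆ E with |C ∩ Y| ≠ 1 for all cycles C, and define the relation u ~ v iff there is a u–v path in G avoiding all edges of Y. Then for every edge uv ∈ E: uv ∈ Y if and only if u is not related to v under the reflexive-transitive closure of adjacency via non-Y edges. -/
/-!
If `uv ∈ Y` and `u`, `v` were joined by a walk avoiding `Y`, shortening it to a path and
closing it with the edge `uv` would give a cycle meeting `Y` in exactly `uv`. Conversely, an
edge `uv ∉ Y` is itself a walk avoiding `Y`.
-/

/-- `u` and `v` are related iff there is a walk from `u` to `v` in `G` using no
edge of `Y` (this is the reflexive-transitive closure of adjacency via non-`Y`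
edges). -/
def ReachAvoiding {V : Type*} (G : SimpleGraph V) (Y : Set (Sym2 V)) (u v : V) : Prop :=
  Relation.ReflTransGen (fun a b => G.Adj a b ∧ s(a, b) ∉ Y) u v

open SimpleGraph

section

variable {V : Type*} {G : SimpleGraph V} {Y : Set (Sym2 V)}

lemma reachAvoiding_iff_reachable_deleteEdges {u v : V} :
    ReachAvoiding G Y u v ↔ (G.deleteEdges Y).Reachable u v := by
  rw [ReachAvoiding, reachable_iff_reflTransGen]
  congr!
  exact (deleteEdges_adj ..).symm

lemma SimpleGraph.Walk.notMem_of_mem_edges_deleteEdges {u v : V}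
    (p : (G.deleteEdges Y).Walk u v) {e : Sym2 V} (he : e ∈ p.edges) : e ∉ Y := by
  have := p.edges_subset_edgeSet he
  rw [edgeSet_deleteEdges] at this
  exact this.2

theorem exists_isCycle_edges_inter_eq_singleton {u v : V} (huv : G.Adj u v)
    (hmem : s(u, v) ∈ Y) (hreach : (G.deleteEdges Y).Reachable u v) :
    ∃ c : G.Walk v v, c.IsCycle ∧ {e | e ∈ c.edges ∧ e ∈ Y} = {s(u, v)} := by
  classical
  obtain ⟨w⟩ := hreach
  let p := w.toPath
  have hp_avoids : ∀ e ∈ p.val.edges, e ∉ Y := fun _ => p.val.notMem_of_mem_edges_deleteEdges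
  let q : G.Path u v := ⟨p.val.mapLe (G.deleteEdges_le Y), p.prop.mapLe _⟩
  have hq_edges : q.val.edges = p.val.edges := Walk.edges_mapLe_eq_edges _ _
  have huv_notMem : s(v, u) ∉ q.val.edges := by
    rw [hq_edges, Sym2.eq_swap]
    exact fun h => hp_avoids _ h hmem
  refine ⟨.cons huv.symm q.val, Path.cons_isCycle q huv.symm huv_notMem, ?_⟩
  ext e
  simp only [Walk.edges_cons, List.mem_cons, hq_edges, Set.mem_ofPred_eq, Set.mem_singleton_iff,
    Sym2.eq_swap (a := v)]
  constructor
  · rintro ⟨rfl | he, heY⟩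
    · rfl
    · exact absurd heY (hp_avoids e he)
  · rintro rfl
    exact ⟨.inl rfl, hmem⟩

end

theorem statement3_general {V : Type*} (G : SimpleGraph V)
    (Y : Set (Sym2 V))
    (hY : ∀ (u : V) (w : G.Walk u u), w.IsCircuit →
      {e | e ∈ w.edges ∧ e ∈ Y}.ncard ≠ 1) :
    ∀ u v : V, G.Adj u v → (s(u, v) ∈ Y ↔ ¬ ReachAvoiding G Y u v) := by
  intro u v huv
  refine ⟨fun hmem hreach => ?_, fun hnot => by_contra fun hmem => hnot (.single ⟨huv, hmem⟩)⟩
  obtain ⟨c, hc, hcY⟩ := exists_isCycle_edges_inter_eq_singleton huv hmem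
    (reachAvoiding_iff_reachable_deleteEdges.mp hreach)
  exact hY v c hc.isCircuit (by rw [hcY, Set.ncard_singleton])

/-- If no cycle of `G` meets `Y` in exactly one edge, then an edge `uv ∈ E`
belongs to `Y` iff `u` and `v` are not connected by a path avoiding `Y`. -/
theorem statement3 {V : Type*} [Fintype V] (G : SimpleGraph V)
    (Y : Set (Sym2 V)) (hYE : Y ⊆ G.edgeSet)
    (hY : ∀ (u : V) (w : G.Walk u u), w.IsCircuit →
      {e | e ∈ w.edges ∧ e ∈ Y}.ncard ≠ 1) :
    ∀ u v : V, G.Adj u v → (s(u, v) ∈ Y ↔ ¬ ReachAvoiding G Y u v) :=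
  statement3_general G Y hY
end
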